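/- Let M_r be the (2r+1)×(2r+1) symmetric tridiagonal integer matrix with diagonal entries alternating -2, 4, -2, 4, ..., -2 (starting and ending with -2) and all off-diagonal (super- and sub-diagonal) entries equal to 1. Then the signature of M_r equals -1 for every r ≥ 0. -/

import Mathlib

/-!
The quadratic form of `seifertM r` only couples indices of different parity, so on vectors
supported on the `r + 1` even indices it is `-2 ∑ xᵢ²` and on vectors supported on the `r` odd
indices it is `4 ∑ xᵢ²`. By the easy half of Sylvester's law of inertia (a subspace on which the
form is positive, resp. negative, definite has dimension at most the number of positive, resp.
negative, eigenvalues), the matrix has at least `r + 1` negative and at least `r` positive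
eigenvalues; as there are only `2 r + 1` eigenvalues, these bounds are exact.
-/

open Matrix

/-- The (2r+1)×(2r+1) symmetric tridiagonal matrix with diagonal alternating
−2, 4, −2, 4, …, −2 (1-indexed: −2 at odd positions, i.e. 0-indexed even
positions) and off-diagonal entries 1. -/
def seifertM (r : ℕ) : Matrix (Fin (2 * r + 1)) (Fin (2 * r + 1)) ℝ :=
  fun i j =>
    if i = j then (if i.val % 2 = 0 then -2 else 4)
    else if i.val + 1 = j.val ∨ j.val + 1 = i.val then 1 else 0

open Finset Module Function

theorem finrank_le_card_filter_pos {𝕜 n V : Type*} [Field 𝕜] [LinearOrder 𝕜]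
    [IsStrictOrderedRing 𝕜] [Fintype n] [AddCommGroup V] [Module 𝕜 V]
    (d : n → 𝕜) (g : V →ₗ[𝕜] n → 𝕜) (h : ∀ v ≠ 0, 0 < ∑ i, d i * g v i ^ 2) :
    finrank 𝕜 V ≤ #{i | 0 < d i} := by
  let s := {i | 0 < d i}
  let restrict : (n → 𝕜) →ₗ[𝕜] s → 𝕜 := LinearMap.funLeft 𝕜 𝕜 Subtype.val
  have hinj : Injective (restrict ∘ₗ g) := by
    refine (injective_iff_map_eq_zero _).2 fun v hv => ?_
    by_contra hv0
    refine (h v hv0).not_ge (sum_nonpos fun i _ => ?_)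
    by_cases hi : 0 < d i
    · have : g v i = 0 := congrFun hv ⟨i, by simpa [s] using hi⟩
      simp [this]
    · exact mul_nonpos_of_nonpos_of_nonneg (not_lt.1 hi) (sq_nonneg _)
  simpa [s] using LinearMap.finrank_le_finrank_of_injective hinj

theorem card_filter_pos_add_card_filter_neg_le {n α : Type*} [Fintype n] [LinearOrder α] [Zero α]
    (d : n → α) : #{i | 0 < d i} + #{i | d i < 0} ≤ Fintype.card n := by
  calc #{i | 0 < d i} + #{i | d i < 0} ≤ #{i | 0 < d i} + #{i | ¬0 < d i} := by
        gcongr with i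
        exact lt_asymm
    _ = Fintype.card n := by rw [card_filter_add_card_filter_not, card_univ]

namespace Matrix.IsHermitian

variable {n : Type*} [Fintype n] [DecidableEq n] {M : Matrix n n ℝ} (hM : M.IsHermitian)

theorem dotProduct_mulVec_self_eq_sum (x : n → ℝ) :
    x ⬝ᵥ M *ᵥ x =
      ∑ i, hM.eigenvalues i * (star (hM.eigenvectorUnitary : Matrix n n ℝ) *ᵥ x) i ^ 2 := by
  have hU : x ᵥ* (hM.eigenvectorUnitary : Matrix n n ℝ) =
      star (hM.eigenvectorUnitary : Matrix n n ℝ) *ᵥ x := by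
    rw [← vecMul_transpose]
    simp [star_eq_conjTranspose, conjTranspose_eq_transpose_of_trivial]
  conv_lhs => rw [hM.spectral_theorem, Unitary.conjStarAlgAut_apply]
  conv_lhs => rw [← mulVec_mulVec, ← mulVec_mulVec, dotProduct_mulVec, hU]
  simp [dotProduct, mulVec_diagonal, sq, mul_left_comm]

theorem finrank_le_card_eigenvalues_pos {V : Type*} [AddCommGroup V] [Module ℝ V]
    (f : V →ₗ[ℝ] n → ℝ) (h : ∀ v ≠ 0, 0 < f v ⬝ᵥ M *ᵥ f v) :
    finrank ℝ V ≤ #{i | 0 < hM.eigenvalues i} :=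
  finrank_le_card_filter_pos _ ((star (hM.eigenvectorUnitary : Matrix n n ℝ)).mulVecLin ∘ₗ f)
    fun v hv => by simpa [hM.dotProduct_mulVec_self_eq_sum] using h v hv

theorem finrank_le_card_eigenvalues_neg {V : Type*} [AddCommGroup V] [Module ℝ V]
    (f : V →ₗ[ℝ] n → ℝ) (h : ∀ v ≠ 0, f v ⬝ᵥ M *ᵥ f v < 0) :
    finrank ℝ V ≤ #{i | hM.eigenvalues i < 0} := by
  simpa using finrank_le_card_filter_pos (-hM.eigenvalues)
    ((star (hM.eigenvectorUnitary : Matrix n n ℝ)).mulVecLin ∘ₗ f)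
    fun v hv => by simpa [hM.dotProduct_mulVec_self_eq_sum] using neg_pos.2 (h v hv)

end Matrix.IsHermitian

section
variable {m n R : Type*} [Fintype m] [Fintype n] [CommSemiring R] {e : m → n}

theorem extend_zero_dotProduct (he : Injective e) (c : m → R) (w : n → R) :
    extend e c 0 ⬝ᵥ w = c ⬝ᵥ (w ∘ e) :=
  (Fintype.sum_of_injective e he _ _
    (fun j hj => by simp [extend_apply' _ _ _ (by simpa using hj)])
    (fun i => by simp [he.extend_apply])).symm

theorem extend_zero_dotProduct_mulVec (he : Injective e) (M : Matrix n n R) (c : m → R) :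
    extend e c 0 ⬝ᵥ M *ᵥ extend e c 0 = c ⬝ᵥ M.submatrix e e *ᵥ c := by
  rw [extend_zero_dotProduct he]
  congr 1
  ext i
  rw [Function.comp_apply, mulVec, dotProduct_comm, extend_zero_dotProduct he, mulVec,
    dotProduct_comm]
  rfl

end

theorem seifertM_apply_of_not_adj {r : ℕ} {i j : Fin (2 * r + 1)} (hij : i ≠ j)
    (hadj : ¬((i : ℕ) + 1 = j ∨ (j : ℕ) + 1 = i)) : seifertM r i j = 0 := by
  simp [seifertM, hij, hadj]

def evenIdx (r : ℕ) : Fin (r + 1) → Fin (2 * r + 1) := fun k => ⟨2 * k, by omega⟩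

def oddIdx (r : ℕ) : Fin r → Fin (2 * r + 1) := fun k => ⟨2 * k + 1, by omega⟩

@[simp]
theorem val_evenIdx (r : ℕ) (k : Fin (r + 1)) : (evenIdx r k : ℕ) = 2 * k := rfl

@[simp]
theorem val_oddIdx (r : ℕ) (k : Fin r) : (oddIdx r k : ℕ) = 2 * k + 1 := rfl

theorem evenIdx_injective (r : ℕ) : Injective (evenIdx r) := fun k l h => by
  simp only [evenIdx, Fin.mk.injEq] at h; omega

theorem oddIdx_injective (r : ℕ) : Injective (oddIdx r) := fun k l h => by
  simp only [oddIdx, Fin.mk.injEq] at h; omega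

theorem seifertM_submatrix_evenIdx (r : ℕ) :
    (seifertM r).submatrix (evenIdx r) (evenIdx r) = (-2 : ℝ) • 1 := by
  ext k l
  rcases eq_or_ne k l with rfl | hkl
  · simp [seifertM, evenIdx]
  · rw [submatrix_apply,
      seifertM_apply_of_not_adj ((evenIdx_injective r).ne hkl) (by simp; omega)]
    simp [hkl]

theorem seifertM_submatrix_oddIdx (r : ℕ) :
    (seifertM r).submatrix (oddIdx r) (oddIdx r) = (4 : ℝ) • 1 := by
  ext k l
  rcases eq_or_ne k l with rfl | hkl
  · simp [seifertM, oddIdx]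
  · rw [submatrix_apply,
      seifertM_apply_of_not_adj ((oddIdx_injective r).ne hkl) (by simp; omega)]
    simp [hkl]

theorem dotProduct_smul_one_mulVec {m R : Type*} [Fintype m] [DecidableEq m] [CommSemiring R]
    (a : R) (c : m → R) : c ⬝ᵥ (a • 1 : Matrix m m R) *ᵥ c = a * (c ⬝ᵥ c) := by
  simp [smul_mulVec]

theorem seifertM_extend_evenIdx_neg (r : ℕ) {c : Fin (r + 1) → ℝ} (hc : c ≠ 0) :
    extend (evenIdx r) c 0 ⬝ᵥ seifertM r *ᵥ extend (evenIdx r) c 0 < 0 := by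
  rw [extend_zero_dotProduct_mulVec (evenIdx_injective r), seifertM_submatrix_evenIdx,
    dotProduct_smul_one_mulVec]
  have hcc : 0 < c ⬝ᵥ c := by simpa using dotProduct_self_star_pos_iff.2 hc
  linarith

theorem seifertM_extend_oddIdx_pos (r : ℕ) {c : Fin r → ℝ} (hc : c ≠ 0) :
    0 < extend (oddIdx r) c 0 ⬝ᵥ seifertM r *ᵥ extend (oddIdx r) c 0 := by
  rw [extend_zero_dotProduct_mulVec (oddIdx_injective r), seifertM_submatrix_oddIdx,
    dotProduct_smul_one_mulVec]
  have hcc : 0 < c ⬝ᵥ c := by simpa using dotProduct_self_star_pos_iff.2 hc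
  linarith

/-- The signature (number of positive eigenvalues minus number of negative
eigenvalues) of `seifertM r` equals −1 for every r ≥ 0. -/
theorem stmt_2 (r : ℕ) (hM : (seifertM r).IsHermitian) :
    ((Finset.univ.filter fun i => 0 < hM.eigenvalues i).card : ℤ) -
      ((Finset.univ.filter fun i => hM.eigenvalues i < 0).card : ℤ) = -1 := by
  have hneg := hM.finrank_le_card_eigenvalues_neg (ExtendByZero.linearMap ℝ (evenIdx r))
    fun _ => seifertM_extend_evenIdx_neg r
  have hpos := hM.finrank_le_card_eigenvalues_pos (ExtendByZero.linearMap ℝ (oddIdx r))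
    fun _ => seifertM_extend_oddIdx_pos r
  have htotal := card_filter_pos_add_card_filter_neg_le hM.eigenvalues
  simp only [finrank_fin_fun, Fintype.card_fin] at hneg hpos htotal
  omega
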